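/- Invariance under the second Reidemeister move on Gauss diagrams: Let G be a one-circle based Gauss diagram with n ≥ 2 arrows containing two distinct arrows x and y with ε x = −(ε y), such that the two tails t x, t y occupy a pair of consecutive positions {p, p+1} (with p+1 ≤ 2n−1) and the two heads h x, h y occupy a pair of consecutive positions {q, q+1} (with q+1 ≤ 2n−1), the two pairs being disjoint. Let G' be the one-circle based Gauss diagram with n−2 arrows obtained from G by deleting x and y and renumbering the remaining 2n−4 endpoint positions preserving their order. Then F_k(G) = F_k(G') for every k ≥ 0. -/
import Mathlib


open Finset

/-- The cyclic successor on `Fin m`. -/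
def cycSucc {m : ℕ} (x : Fin m) : Fin m :=
  ⟨((x : ℕ) + 1) % m, Nat.mod_lt _ x.pos⟩

/-- A based Gauss diagram on one circle with `n` arrows: the `2n` endpoint
positions are read counterclockwise starting just after the base point;
`t i` is the tail and `h i` the head of arrow `i`, all endpoints are pairwise
distinct, and `ε i ∈ {1, -1}` is the sign of arrow `i`. -/
structure GaussDiagram (n : ℕ) where
  t : Fin n → Fin (2 * n)
  h : Fin n → Fin (2 * n)
  inj : Function.Injective (Sum.elim t h)
  ε : Fin n → ℤ
  sign : ∀ i, ε i = 1 ∨ ε i = -1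

namespace GaussDiagram

variable {n : ℕ}

/-- The bijection between arrow-ends and endpoint positions. -/
noncomputable def ends (G : GaussDiagram n) : (Fin n ⊕ Fin n) ≃ Fin (2 * n) :=
  Equiv.ofBijective (Sum.elim G.t G.h)
    ((Fintype.bijective_iff_injective_and_card _).mpr ⟨G.inj, by simp [two_mul]⟩)

/-- The involution `μ` exchanging the tail and the head of each arrow. -/
noncomputable def mu (G : GaussDiagram n) (x : Fin (2 * n)) : Fin (2 * n) :=
  G.ends (Sum.swap (G.ends.symm x))

/-- `σ x = μ x + 1 (mod 2n)`. -/
noncomputable def sigma (G : GaussDiagram n) (x : Fin (2 * n)) : Fin (2 * n) :=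
  ⟨((G.mu x : ℕ) + 1) % (2 * n), Nat.mod_lt _ x.pos⟩

/-- `G` is one-component iff `σ` is a single cycle of length `2n`,
i.e. the `σ`-orbit of any position is everything. -/
def OneComponent (G : GaussDiagram n) : Prop :=
  ∀ x y : Fin (2 * n), ∃ k : ℕ, (G.sigma)^[k] x = y

open Classical in
/-- The visit time of a position: the least `k` with `σ^[k] 0 = x`
(junk value `0` if there is none). -/
noncomputable def tau (G : GaussDiagram n) (x : Fin (2 * n)) : ℕ :=
  if hx : ∃ k : ℕ, (G.sigma)^[k] ⟨0, x.pos⟩ = x then Nat.find hx else 0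

/-- `G` is ascending iff for every arrow the tail is visited before the head. -/
def Ascending (G : GaussDiagram n) : Prop :=
  ∀ i : Fin n, G.tau (G.t i) < G.tau (G.h i)

lemma t_injective (G : GaussDiagram n) : Function.Injective G.t := fun i j hij => by
  have := @G.inj (Sum.inl i) (Sum.inl j) hij
  simpa using this

lemma h_injective (G : GaussDiagram n) : Function.Injective G.h := fun i j hij => by
  have := @G.inj (Sum.inr i) (Sum.inr j) hij
  simpa using this

lemma t_ne_h (G : GaussDiagram n) (i j : Fin n) : G.t i ≠ G.h j := fun e => by
  have := @G.inj (Sum.inl i) (Sum.inr j) e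
  simp at this

/-- The set of endpoint positions of the arrows in `S`. -/
def posSet (G : GaussDiagram n) (S : Finset (Fin n)) : Finset (Fin (2 * n)) :=
  S.image G.t ∪ S.image G.h

lemma posSet_card (G : GaussDiagram n) (S : Finset (Fin n)) :
    (G.posSet S).card = 2 * S.card := by
  rw [posSet, card_union_of_disjoint, card_image_of_injective _ G.t_injective,
    card_image_of_injective _ G.h_injective, two_mul]
  rw [disjoint_left]
  rintro a ha hb
  simp only [mem_image] at ha hb
  obtain ⟨i, -, rfl⟩ := ha
  obtain ⟨j, -, hj⟩ := hb
  exact G.t_ne_h i j hj.symm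

lemma mem_posSet_t (G : GaussDiagram n) {S : Finset (Fin n)} {i : Fin n} (hi : i ∈ S) :
    G.t i ∈ G.posSet S := mem_union_left _ (mem_image_of_mem _ hi)

lemma mem_posSet_h (G : GaussDiagram n) {S : Finset (Fin n)} {i : Fin n} (hi : i ∈ S) :
    G.h i ∈ G.posSet S := mem_union_right _ (mem_image_of_mem _ hi)

/-- The sub-diagram consisting of the arrows of `S` alone, with the endpoint
positions renumbered preserving their order. -/
noncomputable def sub (G : GaussDiagram n) (S : Finset (Fin n)) : GaussDiagram S.card where
  t j := ((G.posSet S).orderIsoOfFin (G.posSet_card S)).symm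
    ⟨G.t (S.orderIsoOfFin rfl j), G.mem_posSet_t (S.orderIsoOfFin rfl j).2⟩
  h j := ((G.posSet S).orderIsoOfFin (G.posSet_card S)).symm
    ⟨G.h (S.orderIsoOfFin rfl j), G.mem_posSet_h (S.orderIsoOfFin rfl j).2⟩
  ε j := G.ε (S.orderIsoOfFin rfl j)
  sign j := G.sign _
  inj := by
    have hP : Function.Injective ((G.posSet S).orderIsoOfFin (G.posSet_card S)).symm :=
      (OrderIso.injective _)
    have hA : Function.Injective (S.orderIsoOfFin rfl) := OrderIso.injective _
    rintro (i | i) (j | j) hij <;> simp only [Sum.elim_inl, Sum.elim_inr] at hij <;>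
      have h1 := congrArg Subtype.val (hP hij)
    · have h2 := @G.inj (Sum.inl (S.orderIsoOfFin rfl i))
        (Sum.inl (S.orderIsoOfFin rfl j)) h1
      simp only [Sum.inl.injEq] at h2
      exact congrArg Sum.inl (hA (Subtype.ext h2))
    · have h2 := @G.inj (Sum.inl (S.orderIsoOfFin rfl i))
        (Sum.inr (S.orderIsoOfFin rfl j)) h1
      simp at h2
    · have h2 := @G.inj (Sum.inr (S.orderIsoOfFin rfl i))
        (Sum.inl (S.orderIsoOfFin rfl j)) h1
      simp at h2
    · have h2 := @G.inj (Sum.inr (S.orderIsoOfFin rfl i))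
        (Sum.inr (S.orderIsoOfFin rfl j)) h1
      simp only [Sum.inr.injEq] at h2
      exact congrArg Sum.inr (hA (Subtype.ext h2))

/-- A subset `S` of the arrows is one-component if the sub-diagram on `S` is. -/
def OneComponentSub (G : GaussDiagram n) (S : Finset (Fin n)) : Prop :=
  (G.sub S).OneComponent

/-- A subset `S` of the arrows is ascending if the sub-diagram on `S` is. -/
def AscendingSub (G : GaussDiagram n) (S : Finset (Fin n)) : Prop :=
  (G.sub S).Ascending

open Classical in
/-- `F k G` is the sum over all one-component ascending subsets `S` of the
arrows with `|S| = k` of the product of the signs of the arrows in `S`. -/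
noncomputable def F (G : GaussDiagram n) (k : ℕ) : ℤ :=
  ∑ S : Finset (Fin n),
    if S.card = k ∧ G.OneComponentSub S ∧ G.AscendingSub S then ∏ i ∈ S, G.ε i else 0

end GaussDiagram

/-- A based Gauss diagram on two circles with `n` arrows and endpoint
distribution `(p, q)`: `p` endpoint positions on the first (based) circle and
`q` on the second, with `p + q = 2n`; `t i` is the tail and `h i` the head of
arrow `i`, all endpoints occur exactly once, and `ε i ∈ {1, -1}`. -/
structure GaussDiagram2 (n p q : ℕ) where
  hpq : p + q = 2 * n
  t : Fin n → Fin p ⊕ Fin q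
  h : Fin n → Fin p ⊕ Fin q
  inj : Function.Injective (Sum.elim t h)
  ε : Fin n → ℤ
  sign : ∀ i, ε i = 1 ∨ ε i = -1

namespace GaussDiagram2

variable {n p q : ℕ}

/-- The bijection between arrow-ends and endpoint positions. -/
noncomputable def ends (G : GaussDiagram2 n p q) : (Fin n ⊕ Fin n) ≃ (Fin p ⊕ Fin q) :=
  Equiv.ofBijective (Sum.elim G.t G.h)
    ((Fintype.bijective_iff_injective_and_card _).mpr ⟨G.inj, by
      have := G.hpq; simp only [Fintype.card_sum, Fintype.card_fin]; omega⟩)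

/-- The involution `μ` exchanging the tail and the head of each arrow. -/
noncomputable def mu (G : GaussDiagram2 n p q) (x : Fin p ⊕ Fin q) : Fin p ⊕ Fin q :=
  G.ends (Sum.swap (G.ends.symm x))

/-- `σ x` is the cyclic successor, within its own circle, of `μ x`. -/
noncomputable def sigma (G : GaussDiagram2 n p q) (x : Fin p ⊕ Fin q) : Fin p ⊕ Fin q :=
  Sum.map cycSucc cycSucc (G.mu x)

/-- `G` is one-component iff both circles carry endpoints and `σ` is a single
cycle of length `p + q`. -/
def OneComponent (G : GaussDiagram2 n p q) : Prop :=
  1 ≤ p ∧ 1 ≤ q ∧ ∀ x y : Fin p ⊕ Fin q, ∃ k : ℕ, (G.sigma)^[k] x = y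

open Classical in
/-- The visit time of a position: the least `k` with `σ^[k] (inl 0) = x`,
iterating from position `0` of the first (based) circle
(junk value `0` if there is none or if `p = 0`). -/
noncomputable def tau (G : GaussDiagram2 n p q) (x : Fin p ⊕ Fin q) : ℕ :=
  if hp : 0 < p then
    (if hx : ∃ k : ℕ, (G.sigma)^[k] (Sum.inl ⟨0, hp⟩) = x then Nat.find hx else 0)
  else 0

/-- `G` is ascending iff for every arrow the tail is visited before the head. -/
def Ascending (G : GaussDiagram2 n p q) : Prop :=
  ∀ i : Fin n, G.tau (G.t i) < G.tau (G.h i)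

lemma t_injective (G : GaussDiagram2 n p q) : Function.Injective G.t := fun i j hij => by
  have := @G.inj (Sum.inl i) (Sum.inl j) hij
  simpa using this

lemma h_injective (G : GaussDiagram2 n p q) : Function.Injective G.h := fun i j hij => by
  have := @G.inj (Sum.inr i) (Sum.inr j) hij
  simpa using this

lemma t_ne_h (G : GaussDiagram2 n p q) (i j : Fin n) : G.t i ≠ G.h j := fun e => by
  have := @G.inj (Sum.inl i) (Sum.inr j) e
  simp at this

/-- The set of endpoint positions of the arrows in `S`. -/
def posSet (G : GaussDiagram2 n p q) (S : Finset (Fin n)) : Finset (Fin p ⊕ Fin q) :=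
  S.image G.t ∪ S.image G.h

lemma posSet_card (G : GaussDiagram2 n p q) (S : Finset (Fin n)) :
    (G.posSet S).card = 2 * S.card := by
  rw [posSet, card_union_of_disjoint, card_image_of_injective _ G.t_injective,
    card_image_of_injective _ G.h_injective, two_mul]
  rw [disjoint_left]
  rintro a ha hb
  simp only [mem_image] at ha hb
  obtain ⟨i, -, rfl⟩ := ha
  obtain ⟨j, -, hj⟩ := hb
  exact G.t_ne_h i j hj.symm

lemma mem_posSet_t (G : GaussDiagram2 n p q) {S : Finset (Fin n)} {i : Fin n} (hi : i ∈ S) :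
    G.t i ∈ G.posSet S := mem_union_left _ (mem_image_of_mem _ hi)

lemma mem_posSet_h (G : GaussDiagram2 n p q) {S : Finset (Fin n)} {i : Fin n} (hi : i ∈ S) :
    G.h i ∈ G.posSet S := mem_union_right _ (mem_image_of_mem _ hi)

/-- Order preserving renumbering of the endpoint positions in `E` on each circle. -/
noncomputable def renum (E : Finset (Fin p ⊕ Fin q)) :
    ∀ x ∈ E, Fin E.toLeft.card ⊕ Fin E.toRight.card
  | Sum.inl a, hx => Sum.inl ((E.toLeft.orderIsoOfFin rfl).symm ⟨a, mem_toLeft.mpr hx⟩)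
  | Sum.inr b, hx => Sum.inr ((E.toRight.orderIsoOfFin rfl).symm ⟨b, mem_toRight.mpr hx⟩)

lemma renum_inj (E : Finset (Fin p ⊕ Fin q)) {x y : Fin p ⊕ Fin q} (hx : x ∈ E) (hy : y ∈ E)
    (hxy : renum E x hx = renum E y hy) : x = y := by
  rcases x with a | a <;> rcases y with b | b <;>
    simp only [renum, Sum.inl.injEq, Sum.inr.injEq, reduceCtorEq] at hxy
  · have := congrArg Subtype.val ((OrderIso.injective _) hxy)
    exact congrArg Sum.inl this
  · have := congrArg Subtype.val ((OrderIso.injective _) hxy)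
    exact congrArg Sum.inr this

/-- The sub-diagram consisting of the arrows of `S` alone, with the endpoint
positions on each circle renumbered preserving their order. -/
noncomputable def sub (G : GaussDiagram2 n p q) (S : Finset (Fin n)) :
    GaussDiagram2 S.card (G.posSet S).toLeft.card (G.posSet S).toRight.card where
  hpq := by rw [card_toLeft_add_card_toRight, G.posSet_card]
  t j := renum (G.posSet S) (G.t (S.orderIsoOfFin rfl j))
    (G.mem_posSet_t (S.orderIsoOfFin rfl j).2)
  h j := renum (G.posSet S) (G.h (S.orderIsoOfFin rfl j))
    (G.mem_posSet_h (S.orderIsoOfFin rfl j).2)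
  ε j := G.ε (S.orderIsoOfFin rfl j)
  sign j := G.sign _
  inj := by
    have hA : Function.Injective (S.orderIsoOfFin rfl) := OrderIso.injective _
    rintro (i | i) (j | j) hij <;> simp only [Sum.elim_inl, Sum.elim_inr] at hij <;>
      have h1 := renum_inj _ _ _ hij
    · have h2 := @G.inj (Sum.inl (S.orderIsoOfFin rfl i))
        (Sum.inl (S.orderIsoOfFin rfl j)) h1
      simp only [Sum.inl.injEq] at h2
      exact congrArg Sum.inl (hA (Subtype.ext h2))
    · have h2 := @G.inj (Sum.inl (S.orderIsoOfFin rfl i))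
        (Sum.inr (S.orderIsoOfFin rfl j)) h1
      simp at h2
    · have h2 := @G.inj (Sum.inr (S.orderIsoOfFin rfl i))
        (Sum.inl (S.orderIsoOfFin rfl j)) h1
      simp at h2
    · have h2 := @G.inj (Sum.inr (S.orderIsoOfFin rfl i))
        (Sum.inr (S.orderIsoOfFin rfl j)) h1
      simp only [Sum.inr.injEq] at h2
      exact congrArg Sum.inr (hA (Subtype.ext h2))

/-- A subset `S` of the arrows is one-component if the sub-diagram on `S` is. -/
def OneComponentSub (G : GaussDiagram2 n p q) (S : Finset (Fin n)) : Prop :=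
  (G.sub S).OneComponent

/-- A subset `S` of the arrows is ascending if the sub-diagram on `S` is. -/
def AscendingSub (G : GaussDiagram2 n p q) (S : Finset (Fin n)) : Prop :=
  (G.sub S).Ascending

open Classical in
/-- `F k G` is the sum over all one-component ascending subsets `S` of the
arrows with `|S| = k` of the product of the signs of the arrows in `S`. -/
noncomputable def F (G : GaussDiagram2 n p q) (k : ℕ) : ℤ :=
  ∑ S : Finset (Fin n),
    if S.card = k ∧ G.OneComponentSub S ∧ G.AscendingSub S then ∏ i ∈ S, G.ε i else 0

end GaussDiagram2

/-- Renumbering of positions after deleting the positions in `R`: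
a remaining position `z` gets the new number `z - #{w ∈ R | w < z}`. -/
def delRenum (R : Finset ℕ) (z : ℕ) : ℕ := z - (R.filter (· < z)).card

section Helpers

open Finset

/-- Pure arithmetic transfer lemma for comparisons. -/
lemma cmp_transfer {p q α α' β β' a a' b b' : ℕ}
    (hα : (α = p ∧ α' = p + 1) ∨ (α = p + 1 ∧ α' = p))
    (hβ : (β = q ∧ β' = q + 1) ∨ (β = q + 1 ∧ β' = q))
    (hpq : p ≠ q ∧ p ≠ q + 1 ∧ p + 1 ≠ q ∧ p + 1 ≠ q + 1)
    (ha : (a' = a ∧ a ≠ p ∧ a ≠ p + 1 ∧ a ≠ q ∧ a ≠ q + 1) ∨ (a = α ∧ a' = α') ∨ (a = β ∧ a' = β'))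
    (hb : (b' = b ∧ b ≠ p ∧ b ≠ p + 1 ∧ b ≠ q ∧ b ≠ q + 1) ∨ (b = α ∧ b' = α') ∨ (b = β ∧ b' = β')) :
    (a < b ↔ a' < b') := by omega

lemma delRenum_lt {R : Finset ℕ} {z₁ z₂ : ℕ} (h₁ : z₁ ∉ R) (h : z₁ < z₂) :
    delRenum R z₁ < delRenum R z₂ := by
  unfold delRenum
  have hsub : R.filter (· < z₂) ⊆ R.filter (· < z₁) ∪ Finset.Ico (z₁ + 1) z₂ := by
    intro w hw
    simp only [mem_filter, mem_union, mem_Ico] at *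
    rcases hw with ⟨hwR, hwlt⟩
    by_cases hlt : w < z₁
    · exact Or.inl ⟨hwR, hlt⟩
    · refine Or.inr ⟨?_, hwlt⟩
      rcases Nat.lt_or_ge z₁ w with h' | h'
      · omega
      · exact absurd (by omega : w = z₁) (fun hc => h₁ (hc ▸ hwR))
  have h2 : (R.filter (· < z₂)).card ≤ (R.filter (· < z₁)).card + (z₂ - (z₁ + 1)) := by
    calc (R.filter (· < z₂)).card ≤ (R.filter (· < z₁) ∪ Finset.Ico (z₁ + 1) z₂).card :=
          card_le_card hsub
      _ ≤ (R.filter (· < z₁)).card + (Finset.Ico (z₁ + 1) z₂).card := card_union_le _ _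
      _ = (R.filter (· < z₁)).card + (z₂ - (z₁ + 1)) := by rw [Nat.card_Ico]
  have h3 : (R.filter (· < z₁)).card ≤ z₁ := by
    calc (R.filter (· < z₁)).card ≤ (Finset.range z₁).card := by
          apply card_le_card; intro w hw
          simp only [mem_filter] at hw; exact mem_range.mpr hw.2
      _ = z₁ := card_range _
  omega

lemma delRenum_lt_iff {R : Finset ℕ} {z₁ z₂ : ℕ} (h₁ : z₁ ∉ R) (h₂ : z₂ ∉ R) :
    delRenum R z₁ < delRenum R z₂ ↔ z₁ < z₂ := by
  constructor
  · intro h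
    by_contra hc
    push_neg at hc
    rcases Nat.lt_or_ge z₂ z₁ with h' | h'
    · exact absurd h (by have := delRenum_lt h₂ h'; omega)
    · have : z₁ = z₂ := by omega
      subst this; omega
  · exact delRenum_lt h₁

lemma orderIso_symm_val {α : Type*} [LinearOrder α] (s : Finset α) {k : ℕ} (h : s.card = k)
    {z : α} (hz : z ∈ s) :
    (((s.orderIsoOfFin h).symm ⟨z, hz⟩ : Fin k) : ℕ) = (s.filter (· < z)).card := by
  set j := (s.orderIsoOfFin h).symm ⟨z, hz⟩ with hj
  have himg : s.filter (· < z) = (Finset.Iio j).image (fun u => (s.orderIsoOfFin h u : α)) := by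
    ext w
    simp only [mem_filter, mem_image, mem_Iio]
    constructor
    · rintro ⟨hw, hwz⟩
      refine ⟨(s.orderIsoOfFin h).symm ⟨w, hw⟩, ?_, ?_⟩
      · rw [hj, OrderIso.lt_iff_lt]
        exact Subtype.mk_lt_mk.mpr hwz
      · rw [OrderIso.apply_symm_apply]
    · rintro ⟨u, hu, rfl⟩
      refine ⟨(s.orderIsoOfFin h u).2, ?_⟩
      have : s.orderIsoOfFin h u < s.orderIsoOfFin h j := by
        rw [OrderIso.lt_iff_lt]; exact hu
      have hz' : (s.orderIsoOfFin h j : α) = z := by rw [hj, OrderIso.apply_symm_apply]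
      calc (s.orderIsoOfFin h u : α) < (s.orderIsoOfFin h j : α) := this
        _ = z := hz'
  rw [himg, card_image_of_injective _ (fun a b hab =>
    (s.orderIsoOfFin h).injective (Subtype.ext hab)), Fin.card_Iio]

namespace GaussDiagram

variable {m : ℕ}

lemma mu_t (G : GaussDiagram m) (i : Fin m) : G.mu (G.t i) = G.h i := by
  have h1 : G.ends (Sum.inl i) = G.t i := rfl
  rw [mu, ← h1, Equiv.symm_apply_apply]
  rfl

lemma mu_h (G : GaussDiagram m) (i : Fin m) : G.mu (G.h i) = G.t i := by
  have h1 : G.ends (Sum.inr i) = G.h i := rfl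
  rw [mu, ← h1, Equiv.symm_apply_apply]
  rfl

lemma mu_injective (G : GaussDiagram m) : Function.Injective G.mu := by
  intro a b hab
  have h1 := G.ends.injective hab
  have h2 := congrArg Sum.swap h1
  simp only [Sum.swap_swap] at h2
  exact G.ends.symm.injective h2

lemma sigma_injective (G : GaussDiagram m) : Function.Injective G.sigma := by
  intro a b hab
  have h1 : ((G.mu a : ℕ) + 1) % (2 * m) = ((G.mu b : ℕ) + 1) % (2 * m) :=
    congrArg Fin.val hab
  have hma := (G.mu a).isLt
  have hmb := (G.mu b).isLt
  have hmod : ∀ c : ℕ, c < 2 * m → (c + 1) % (2 * m) = if c + 1 = 2 * m then 0 else c + 1 := by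
    intro c hc
    by_cases hcc : c + 1 = 2 * m
    · simp [hcc, Nat.mod_self]
    · rw [if_neg hcc, Nat.mod_eq_of_lt (by omega)]
  rw [hmod _ hma, hmod _ hmb] at h1
  have : (G.mu a : ℕ) = (G.mu b : ℕ) := by
    by_cases h1a : (G.mu a : ℕ) + 1 = 2 * m <;> by_cases h1b : (G.mu b : ℕ) + 1 = 2 * m <;>
      simp [h1a, h1b] at h1 <;> omega
  exact G.mu_injective (Fin.ext this)

/-- `rk G S c` counts the endpoints of arrows of `S` whose position value is `< c`. -/
def rk (G : GaussDiagram m) (S : Finset (Fin m)) (c : ℕ) : ℕ :=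
  (S.filter fun j => (G.t j : ℕ) < c).card + (S.filter fun j => (G.h j : ℕ) < c).card

lemma posSet_disjoint (G : GaussDiagram m) (S : Finset (Fin m)) :
    Disjoint (S.image G.t) (S.image G.h) := by
  rw [disjoint_left]
  rintro a ha hb
  simp only [mem_image] at ha hb
  obtain ⟨i, -, rfl⟩ := ha
  obtain ⟨j, -, hj⟩ := hb
  exact G.t_ne_h i j hj.symm

lemma filter_lt_card_eq_rk (G : GaussDiagram m) (S : Finset (Fin m)) (z : Fin (2 * m)) :
    ((G.posSet S).filter (· < z)).card = rk G S (z : ℕ) := by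
  have h1 : (G.posSet S).filter (· < z)
      = (G.posSet S).filter (fun w : Fin (2 * m) => (w : ℕ) < (z : ℕ)) :=
    filter_congr fun w _ => Iff.rfl
  rw [h1, posSet, filter_union,
    card_union_of_disjoint (disjoint_filter_filter (G.posSet_disjoint S)),
    filter_image, filter_image, card_image_of_injective _ G.t_injective,
    card_image_of_injective _ G.h_injective]
  rfl

lemma sub_t_val (G : GaussDiagram m) (S : Finset (Fin m)) (j : Fin S.card) :
    ((G.sub S).t j : ℕ) = rk G S ((G.t (S.orderIsoOfFin rfl j)) : ℕ) := by
  have h0 : (G.sub S).t j = ((G.posSet S).orderIsoOfFin (G.posSet_card S)).symm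
      ⟨G.t (S.orderIsoOfFin rfl j), G.mem_posSet_t (S.orderIsoOfFin rfl j).2⟩ := rfl
  rw [h0, orderIso_symm_val, filter_lt_card_eq_rk]

lemma sub_h_val (G : GaussDiagram m) (S : Finset (Fin m)) (j : Fin S.card) :
    ((G.sub S).h j : ℕ) = rk G S ((G.h (S.orderIsoOfFin rfl j)) : ℕ) := by
  have h0 : (G.sub S).h j = ((G.posSet S).orderIsoOfFin (G.posSet_card S)).symm
      ⟨G.h (S.orderIsoOfFin rfl j), G.mem_posSet_h (S.orderIsoOfFin rfl j).2⟩ := rfl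
  rw [h0, orderIso_symm_val, filter_lt_card_eq_rk]

lemma sub_t_val' (G : GaussDiagram m) (S : Finset (Fin m)) {i : Fin m} (hi : i ∈ S) :
    ((G.sub S).t ((S.orderIsoOfFin rfl).symm ⟨i, hi⟩) : ℕ) = rk G S ((G.t i) : ℕ) := by
  rw [sub_t_val]
  have hco : ((S.orderIsoOfFin rfl) ((S.orderIsoOfFin rfl).symm ⟨i, hi⟩) : Fin m) = i :=
    congrArg Subtype.val ((S.orderIsoOfFin rfl).apply_symm_apply ⟨i, hi⟩)
  rw [hco]

lemma sub_h_val' (G : GaussDiagram m) (S : Finset (Fin m)) {i : Fin m} (hi : i ∈ S) :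
    ((G.sub S).h ((S.orderIsoOfFin rfl).symm ⟨i, hi⟩) : ℕ) = rk G S ((G.h i) : ℕ) := by
  rw [sub_h_val]
  have hco : ((S.orderIsoOfFin rfl) ((S.orderIsoOfFin rfl).symm ⟨i, hi⟩) : Fin m) = i :=
    congrArg Subtype.val ((S.orderIsoOfFin rfl).apply_symm_apply ⟨i, hi⟩)
  rw [hco]

end GaussDiagram

end Helpers

section Helpers2

open Finset

namespace GaussDiagram

variable {m : ℕ}

lemma exists_iter_lt (G : GaussDiagram m) (hoc : G.OneComponent) (hm : 0 < m)
    (z : Fin (2 * m)) : ∃ k, k < 2 * m ∧ (G.sigma)^[k] ⟨0, by omega⟩ = z := by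
  set z0 : Fin (2 * m) := ⟨0, by omega⟩ with hz0
  -- find a period
  have hper : ∃ d, 0 < d ∧ d ≤ 2 * m ∧ (G.sigma)^[d] z0 = z0 := by
    have hninj : ¬ Function.Injective (fun k : Fin (2 * m + 1) => (G.sigma)^[(k : ℕ)] z0) := by
      intro hinj
      have := Fintype.card_le_of_injective _ hinj
      simp only [Fintype.card_fin] at this
      omega
    obtain ⟨a, b, hab, hne⟩ := Function.not_injective_iff.mp hninj
    rcases Nat.lt_or_ge (a : ℕ) (b : ℕ) with hlt | hge
    · refine ⟨(b : ℕ) - (a : ℕ), by omega, by omega, ?_⟩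
      have h1 : (G.sigma)^[(a : ℕ)] ((G.sigma)^[(b : ℕ) - (a : ℕ)] z0) = (G.sigma)^[(a : ℕ)] z0 := by
        rw [← Function.iterate_add_apply]
        have : (a : ℕ) + ((b : ℕ) - (a : ℕ)) = (b : ℕ) := by omega
        rw [this]; exact hab.symm
      exact (Function.Injective.iterate G.sigma_injective (a : ℕ)) h1
    · have hlt : (b : ℕ) < (a : ℕ) := by
        rcases Nat.lt_or_ge (b : ℕ) (a : ℕ) with h | h
        · exact h
        · exact absurd (Fin.ext (by omega)) hne
      refine ⟨(a : ℕ) - (b : ℕ), by omega, by omega, ?_⟩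
      have h1 : (G.sigma)^[(b : ℕ)] ((G.sigma)^[(a : ℕ) - (b : ℕ)] z0) = (G.sigma)^[(b : ℕ)] z0 := by
        rw [← Function.iterate_add_apply]
        have : (b : ℕ) + ((a : ℕ) - (b : ℕ)) = (a : ℕ) := by omega
        rw [this]; exact hab
      exact (Function.Injective.iterate G.sigma_injective (b : ℕ)) h1
  obtain ⟨d, hd0, hdN, hdper⟩ := hper
  obtain ⟨k, hk⟩ := hoc z0 z
  have hmod : ∀ a r : ℕ, (G.sigma)^[d * a + r] z0 = (G.sigma)^[r] z0 := by
    intro a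
    induction a with
    | zero => intro r; simp
    | succ a ih =>
      intro r
      have : d * (a + 1) + r = (d * a + r) + d := by ring
      rw [this, Function.iterate_add_apply, hdper, ih]
  refine ⟨k % d, by have := Nat.mod_lt k hd0; omega, ?_⟩
  have hdm : d * (k / d) + k % d = k := Nat.div_add_mod k d
  calc (G.sigma)^[k % d] z0 = (G.sigma)^[d * (k / d) + k % d] z0 := (hmod _ _).symm
    _ = z := by rw [hdm, hk]

lemma iter_inj (G : GaussDiagram m) (hoc : G.OneComponent) (hm : 0 < m)
    {k₁ k₂ : ℕ} (h₁ : k₁ < 2 * m) (h₂ : k₂ < 2 * m)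
    (h : (G.sigma)^[k₁] ⟨0, by omega⟩ = (G.sigma)^[k₂] ⟨0, by omega⟩) : k₁ = k₂ := by
  set g : Fin (2 * m) → Fin (2 * m) := fun k => (G.sigma)^[(k : ℕ)] ⟨0, by omega⟩ with hg
  have hsurj : Function.Surjective g := by
    intro z
    obtain ⟨k, hk, hkz⟩ := G.exists_iter_lt hoc hm z
    exact ⟨⟨k, hk⟩, hkz⟩
  have hinj : Function.Injective g := Finite.injective_iff_surjective.mpr hsurj
  have := hinj (a₁ := ⟨k₁, h₁⟩) (a₂ := ⟨k₂, h₂⟩) h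
  exact congrArg Fin.val this

lemma tau_spec (G : GaussDiagram m) (hoc : G.OneComponent) (hm : 0 < m) (z : Fin (2 * m)) :
    (G.sigma)^[G.tau z] ⟨0, z.pos⟩ = z ∧ G.tau z < 2 * m := by
  obtain ⟨k, hk, hkz⟩ := G.exists_iter_lt hoc hm z
  have hex : ∃ j : ℕ, (G.sigma)^[j] ⟨0, z.pos⟩ = z := ⟨k, hkz⟩
  rw [GaussDiagram.tau, dif_pos hex]
  exact ⟨Nat.find_spec hex, lt_of_le_of_lt (Nat.find_min' hex hkz) hk⟩

lemma tau_unique (G : GaussDiagram m) (hoc : G.OneComponent) (hm : 0 < m)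
    {z : Fin (2 * m)} {k : ℕ} (hk : k < 2 * m) (h : (G.sigma)^[k] ⟨0, z.pos⟩ = z) :
    G.tau z = k := by
  obtain ⟨hspec, hlt⟩ := G.tau_spec hoc hm z
  exact G.iter_inj hoc hm hlt hk (hspec.trans h.symm)

lemma sigma_iterate_period (G : GaussDiagram m) (hoc : G.OneComponent) (hm : 0 < m) :
    (G.sigma)^[2 * m] ⟨0, by omega⟩ = ⟨0, by omega⟩ := by
  obtain ⟨k, hk, hkz⟩ := G.exists_iter_lt hoc hm ((G.sigma)^[2 * m] ⟨0, by omega⟩)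
  by_cases hk0 : k = 0
  · rw [hk0] at hkz; simpa using hkz.symm
  · exfalso
    have h1 : (G.sigma)^[k] ((G.sigma)^[2 * m - k] ⟨0, by omega⟩) = (G.sigma)^[k] ⟨0, by omega⟩ := by
      rw [← Function.iterate_add_apply]
      have : k + (2 * m - k) = 2 * m := by omega
      rw [this, hkz]
    have h2 := (Function.Injective.iterate G.sigma_injective k) h1
    have h3 := G.iter_inj hoc hm (k₁ := 2 * m - k) (k₂ := 0) (by omega) (by omega) (by simpa using h2)
    omega

/-- σ at a position whose μ-value is known. -/
lemma sigma_val (G : GaussDiagram m) {w : Fin (2 * m)} {c : ℕ} (h : (G.mu w : ℕ) = c) :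
    (G.sigma w : ℕ) = (c + 1) % (2 * m) := by
  simp [GaussDiagram.sigma, h]

/-- A diagram containing two arrows whose tails occupy consecutive positions and whose
heads occupy consecutive positions is not both one-component and ascending. -/
lemma notBoth (H : GaussDiagram m) (i j : Fin m) (A B : ℕ)
    (hti : (H.t i : ℕ) = A) (htj : (H.t j : ℕ) = A + 1)
    (hij : ((H.h i : ℕ) = B ∧ (H.h j : ℕ) = B + 1) ∨ ((H.h i : ℕ) = B + 1 ∧ (H.h j : ℕ) = B))
    (hd : A ≠ B ∧ A ≠ B + 1 ∧ A + 1 ≠ B ∧ A + 1 ≠ B + 1) :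
    ¬ (H.OneComponent ∧ H.Ascending) := by
  rintro ⟨hoc, hasc⟩
  have hm : 0 < m := i.pos
  have hA1 : A + 1 < 2 * m := htj ▸ (H.t j).isLt
  have hB1 : B + 1 < 2 * m := by
    rcases hij with ⟨h1, h2⟩ | ⟨h1, h2⟩
    · exact h2 ▸ (H.h j).isLt
    · exact h1 ▸ (H.h i).isLt
  rcases hij with ⟨hhi, hhj⟩ | ⟨hhi, hhj⟩
  · -- parallel case : i : A → B, j : A+1 → B+1
    -- σ (t i) = h j, σ (h i) = t j
    have hmu1 : (H.mu (H.t i) : ℕ) = B := by rw [H.mu_t]; exact hhi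
    have hmu2 : (H.mu (H.h i) : ℕ) = A := by rw [H.mu_h]; exact hti
    have hs1 : H.sigma (H.t i) = H.h j := by
      apply Fin.ext
      rw [H.sigma_val hmu1, hhj, Nat.mod_eq_of_lt hB1]
    have hs2 : H.sigma (H.h i) = H.t j := by
      apply Fin.ext
      rw [H.sigma_val hmu2, htj, Nat.mod_eq_of_lt hA1]
    set a := H.tau (H.t i)
    set b := H.tau (H.h i)
    obtain ⟨haspec, halt⟩ := H.tau_spec hoc hm (H.t i)
    obtain ⟨hbspec, hblt⟩ := H.tau_spec hoc hm (H.h i)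
    -- tau (h j) = a + 1
    have hiter1 : (H.sigma)^[a + 1] ⟨0, (H.h j).pos⟩ = H.h j := by
      rw [Function.iterate_succ_apply']
      have : ((⟨0, (H.h j).pos⟩ : Fin (2 * m))) = (⟨0, (H.t i).pos⟩ : Fin (2 * m)) := rfl
      rw [this, haspec, hs1]
    have ha1lt : a + 1 < 2 * m := by
      rcases Nat.lt_or_ge (a + 1) (2 * m) with h | h
      · exact h
      · exfalso
        have ha1 : a + 1 = 2 * m := by omega
        have h0 : H.h j = ⟨0, by omega⟩ := by
          rw [← hiter1, ha1]
          exact H.sigma_iterate_period hoc hm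
        have hval : (H.h j : ℕ) = 0 := by rw [h0]
        omega
    have htauhj : H.tau (H.h j) = a + 1 := H.tau_unique hoc hm ha1lt hiter1
    have hiter2 : (H.sigma)^[b + 1] ⟨0, (H.t j).pos⟩ = H.t j := by
      rw [Function.iterate_succ_apply']
      have : ((⟨0, (H.t j).pos⟩ : Fin (2 * m))) = (⟨0, (H.h i).pos⟩ : Fin (2 * m)) := rfl
      rw [this, hbspec, hs2]
    have hb1lt : b + 1 < 2 * m := by
      rcases Nat.lt_or_ge (b + 1) (2 * m) with h | h
      · exact h
      · exfalso
        have hb1 : b + 1 = 2 * m := by omega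
        have h0 : H.t j = ⟨0, by omega⟩ := by
          rw [← hiter2, hb1]
          exact H.sigma_iterate_period hoc hm
        have hval : (H.t j : ℕ) = 0 := by rw [h0]
        omega
    have htautj : H.tau (H.t j) = b + 1 := H.tau_unique hoc hm hb1lt hiter2
    have h1 := hasc i
    have h2 := hasc j
    rw [htautj, htauhj] at h2
    omega
  · -- antiparallel case : σ has the 2-cycle {t j, h i}
    have hmu1 : (H.mu (H.t j) : ℕ) = B := by rw [H.mu_t]; exact hhj
    have hmu2 : (H.mu (H.h i) : ℕ) = A := by rw [H.mu_h]; exact hti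
    have hs1 : H.sigma (H.t j) = H.h i := by
      apply Fin.ext
      rw [H.sigma_val hmu1, hhi, Nat.mod_eq_of_lt hB1]
    have hs2 : H.sigma (H.h i) = H.t j := by
      apply Fin.ext
      rw [H.sigma_val hmu2, htj, Nat.mod_eq_of_lt hA1]
    have horbit : ∀ k : ℕ, (H.sigma)^[k] (H.t j) = H.t j ∨ (H.sigma)^[k] (H.t j) = H.h i := by
      intro k
      induction k with
      | zero => exact Or.inl rfl
      | succ k ih =>
        rw [Function.iterate_succ_apply']
        rcases ih with h | h
        · rw [h, hs1]; exact Or.inr rfl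
        · rw [h, hs2]; exact Or.inl rfl
    obtain ⟨k, hk⟩ := hoc (H.t j) (H.t i)
    rcases horbit k with h | h <;> rw [hk] at h <;> have := congrArg Fin.val h <;> omega

lemma iso_transfer {m₁ m₂ : ℕ} (hm : m₁ = m₂) (G₁ : GaussDiagram m₁) (G₂ : GaussDiagram m₂)
    (φ : Fin m₁ → Fin m₂) (hφ : Function.Injective φ)
    (hts : ∀ i, ((G₂.t (φ i)) : ℕ) = ((G₁.t i) : ℕ))
    (hhs : ∀ i, ((G₂.h (φ i)) : ℕ) = ((G₁.h i) : ℕ)) :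
    (G₁.OneComponent ↔ G₂.OneComponent) ∧ (G₁.Ascending ↔ G₂.Ascending) := by
  subst hm
  have ht2 : ∀ i, G₂.t (φ i) = G₁.t i := fun i => Fin.ext (hts i)
  have hh2 : ∀ i, G₂.h (φ i) = G₁.h i := fun i => Fin.ext (hhs i)
  have hφs : Function.Surjective φ := Finite.injective_iff_surjective.mp hφ
  have hmu : G₂.mu = G₁.mu := by
    funext z
    obtain ⟨u, hu⟩ := G₁.ends.surjective z
    cases u with
    | inl i =>
      have hz : z = G₁.t i := hu.symm
      rw [hz, G₁.mu_t, ← ht2 i, G₂.mu_t, hh2 i]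
    | inr i =>
      have hz : z = G₁.h i := hu.symm
      rw [hz, G₁.mu_h, ← hh2 i, G₂.mu_h, ht2 i]
  have hsig : G₂.sigma = G₁.sigma := by
    funext z
    simp [GaussDiagram.sigma, hmu]
  have htau : G₂.tau = G₁.tau := by
    funext z
    rw [GaussDiagram.tau, GaussDiagram.tau, hsig]
  constructor
  · constructor <;> intro h z w
    · rw [hsig]; exact h z w
    · rw [← hsig]; exact h z w
  · constructor
    · intro h i'
      obtain ⟨i, rfl⟩ := hφs i'
      rw [ht2, hh2, htau]
      exact h i
    · intro h i
      have := h (φ i)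
      rw [ht2, hh2, htau] at this
      exact this

lemma pred_transfer {n₁ n₂ : ℕ} (G₁ : GaussDiagram n₁) (G₂ : GaussDiagram n₂)
    (S₁ : Finset (Fin n₁)) (S₂ : Finset (Fin n₂)) (f : Fin n₁ → Fin n₂)
    (hfi : Set.InjOn f S₁) (hS₂ : S₂ = S₁.image f)
    (hrt : ∀ i ∈ S₁, rk G₂ S₂ ((G₂.t (f i)) : ℕ) = rk G₁ S₁ ((G₁.t i) : ℕ))
    (hrh : ∀ i ∈ S₁, rk G₂ S₂ ((G₂.h (f i)) : ℕ) = rk G₁ S₁ ((G₁.h i) : ℕ)) :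
    ((G₁.OneComponentSub S₁ ∧ G₁.AscendingSub S₁) ↔
      (G₂.OneComponentSub S₂ ∧ G₂.AscendingSub S₂)) := by
  classical
  have hm : S₁.card = S₂.card := by rw [hS₂, card_image_of_injOn hfi]
  have hmemf : ∀ j : Fin S₁.card, f ((S₁.orderIsoOfFin rfl j) : Fin n₁) ∈ S₂ := fun j => by
    rw [hS₂]; exact mem_image_of_mem f (S₁.orderIsoOfFin rfl j).2
  set φ : Fin S₁.card → Fin S₂.card := fun j =>
    (S₂.orderIsoOfFin rfl).symm ⟨f ((S₁.orderIsoOfFin rfl j) : Fin n₁), hmemf j⟩ with hφdef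
  have hφinj : Function.Injective φ := by
    intro a b hab
    have h1 := (S₂.orderIsoOfFin rfl).symm.injective hab
    have h2 : f ((S₁.orderIsoOfFin rfl a) : Fin n₁) = f ((S₁.orderIsoOfFin rfl b) : Fin n₁) :=
      congrArg Subtype.val h1
    have h3 := hfi (S₁.orderIsoOfFin rfl a).2 (S₁.orderIsoOfFin rfl b).2 h2
    exact (S₁.orderIsoOfFin rfl).injective (Subtype.ext h3)
  have key := iso_transfer hm (G₁.sub S₁) (G₂.sub S₂) φ hφinj
    (fun j => by
      rw [sub_t_val, sub_t_val]
      have hco : ((S₂.orderIsoOfFin rfl) (φ j) : Fin n₂) = f ((S₁.orderIsoOfFin rfl j) : Fin n₁) :=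
        congrArg Subtype.val ((S₂.orderIsoOfFin rfl).apply_symm_apply _)
      rw [hco]
      exact hrt _ (S₁.orderIsoOfFin rfl j).2)
    (fun j => by
      rw [sub_h_val, sub_h_val]
      have hco : ((S₂.orderIsoOfFin rfl) (φ j) : Fin n₂) = f ((S₁.orderIsoOfFin rfl j) : Fin n₁) :=
        congrArg Subtype.val ((S₂.orderIsoOfFin rfl).apply_symm_apply _)
      rw [hco]
      exact hrh _ (S₁.orderIsoOfFin rfl j).2)
  exact and_congr key.1 key.2

end GaussDiagram

end Helpers2

set_option maxHeartbeats 2000000 in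
theorem F_reidemeister_two {n : ℕ} (G : GaussDiagram (n + 2)) (x y : Fin (n + 2))
    (hxy : x ≠ y) (hsgn : G.ε x = -(G.ε y)) (p q : ℕ)
    (hp : p + 1 ≤ 2 * (n + 2) - 1) (hq : q + 1 ≤ 2 * (n + 2) - 1)
    (ht : ({(G.t x : ℕ), (G.t y : ℕ)} : Finset ℕ) = {p, p + 1})
    (hh : ({(G.h x : ℕ), (G.h y : ℕ)} : Finset ℕ) = {q, q + 1})
    (hdisj : Disjoint ({p, p + 1} : Finset ℕ) ({q, q + 1} : Finset ℕ))
    (e : Fin n → Fin (n + 2)) (he : Function.Injective e)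
    (hex : ∀ j : Fin n, e j ≠ x ∧ e j ≠ y)
    (G' : GaussDiagram n)
    (h't : ∀ i : Fin n, (G'.t i : ℕ) = delRenum {p, p + 1, q, q + 1} (G.t (e i) : ℕ))
    (h'h : ∀ i : Fin n, (G'.h i : ℕ) = delRenum {p, p + 1, q, q + 1} (G.h (e i) : ℕ))
    (h'e : ∀ i : Fin n, G'.ε i = G.ε (e i))
    (k : ℕ) :
    G.F k = G'.F k := by
  classical
  -- basic facts about endpoint values
  have htx : (G.t x : ℕ) = p ∨ (G.t x : ℕ) = p + 1 := by
    have : (G.t x : ℕ) ∈ ({p, p + 1} : Finset ℕ) := by rw [← ht]; exact mem_insert_self _ _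
    simpa using this
  have hty : (G.t y : ℕ) = p ∨ (G.t y : ℕ) = p + 1 := by
    have : (G.t y : ℕ) ∈ ({p, p + 1} : Finset ℕ) := by
      rw [← ht]; exact mem_insert_of_mem (mem_singleton_self _)
    simpa using this
  have hhx : (G.h x : ℕ) = q ∨ (G.h x : ℕ) = q + 1 := by
    have : (G.h x : ℕ) ∈ ({q, q + 1} : Finset ℕ) := by rw [← hh]; exact mem_insert_self _ _
    simpa using this
  have hhy : (G.h y : ℕ) = q ∨ (G.h y : ℕ) = q + 1 := by
    have : (G.h y : ℕ) ∈ ({q, q + 1} : Finset ℕ) := by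
      rw [← hh]; exact mem_insert_of_mem (mem_singleton_self _)
    simpa using this
  have htxy : (G.t x : ℕ) ≠ (G.t y : ℕ) := fun hc => hxy (G.t_injective (Fin.ext hc))
  have hhxy : (G.h x : ℕ) ≠ (G.h y : ℕ) := fun hc => hxy (G.h_injective (Fin.ext hc))
  have hvt : ((G.t x : ℕ) = p ∧ (G.t y : ℕ) = p + 1) ∨
      ((G.t x : ℕ) = p + 1 ∧ (G.t y : ℕ) = p) := by omega
  have hvh : ((G.h x : ℕ) = q ∧ (G.h y : ℕ) = q + 1) ∨
      ((G.h x : ℕ) = q + 1 ∧ (G.h y : ℕ) = q) := by omega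
  have hpq4 : p ≠ q ∧ p ≠ q + 1 ∧ p + 1 ≠ q ∧ p + 1 ≠ q + 1 := by
    have h1 : p ∉ ({q, q + 1} : Finset ℕ) := disjoint_left.mp hdisj (mem_insert_self _ _)
    have h2 : p + 1 ∉ ({q, q + 1} : Finset ℕ) :=
      disjoint_left.mp hdisj (mem_insert_of_mem (mem_singleton_self _))
    simp only [mem_insert, mem_singleton, not_or] at h1 h2
    exact ⟨h1.1, h1.2, h2.1, h2.2⟩
  have havT : ∀ i : Fin (n + 2), i ≠ x → i ≠ y →
      (G.t i : ℕ) ∉ ({p, p + 1, q, q + 1} : Finset ℕ) := by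
    intro i hix hiy
    have h1 : (G.t i : ℕ) ≠ (G.t x : ℕ) := fun hc => hix (G.t_injective (Fin.ext hc))
    have h2 : (G.t i : ℕ) ≠ (G.t y : ℕ) := fun hc => hiy (G.t_injective (Fin.ext hc))
    have h3 : (G.t i : ℕ) ≠ (G.h x : ℕ) := fun hc => G.t_ne_h i x (Fin.ext hc)
    have h4 : (G.t i : ℕ) ≠ (G.h y : ℕ) := fun hc => G.t_ne_h i y (Fin.ext hc)
    simp only [mem_insert, mem_singleton, not_or]
    omega
  have havH : ∀ i : Fin (n + 2), i ≠ x → i ≠ y →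
      (G.h i : ℕ) ∉ ({p, p + 1, q, q + 1} : Finset ℕ) := by
    intro i hix hiy
    have h1 : (G.h i : ℕ) ≠ (G.t x : ℕ) := fun hc => G.t_ne_h x i (Fin.ext hc).symm
    have h2 : (G.h i : ℕ) ≠ (G.t y : ℕ) := fun hc => G.t_ne_h y i (Fin.ext hc).symm
    have h3 : (G.h i : ℕ) ≠ (G.h x : ℕ) := fun hc => hix (G.h_injective (Fin.ext hc))
    have h4 : (G.h i : ℕ) ≠ (G.h y : ℕ) := fun hc => hiy (G.h_injective (Fin.ext hc))
    simp only [mem_insert, mem_singleton, not_or]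
    omega
  set σe : Fin (n + 2) ≃ Fin (n + 2) := Equiv.swap x y with hσe
  have hmem_img : ∀ S : Finset (Fin (n + 2)),
      (x ∈ S.image σe ↔ y ∈ S) ∧ (y ∈ S.image σe ↔ x ∈ S) := by
    intro S
    constructor
    · constructor
      · intro hmem
        obtain ⟨b, hb, hbe⟩ := mem_image.mp hmem
        have hb' : b = y := by
          by_contra hby
          by_cases hbx : b = x
          · subst hbx
            rw [hσe, Equiv.swap_apply_left] at hbe
            exact hxy hbe.symm
          · rw [hσe, Equiv.swap_apply_of_ne_of_ne hbx hby] at hbe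
            exact hbx hbe
        exact hb' ▸ hb
      · intro hy
        exact mem_image.mpr ⟨y, hy, Equiv.swap_apply_right x y⟩
    · constructor
      · intro hmem
        obtain ⟨b, hb, hbe⟩ := mem_image.mp hmem
        have hb' : b = x := by
          by_contra hbx
          by_cases hby : b = y
          · subst hby
            rw [hσe, Equiv.swap_apply_right] at hbe
            exact hxy hbe
          · rw [hσe, Equiv.swap_apply_of_ne_of_ne hbx hby] at hbe
            exact hby hbe
        exact hb' ▸ hb
      · intro hx
        exact mem_image.mpr ⟨x, hx, Equiv.swap_apply_left x y⟩
  have himg2 : ∀ S : Finset (Fin (n + 2)), (S.image σe).image σe = S := by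
    intro S
    rw [image_image]
    have hcomp : (⇑σe ∘ ⇑σe) = id := funext fun z => Equiv.swap_apply_self x y z
    rw [hcomp, image_id]
  -- transfer of comparisons under the swap
  have pairT : ∀ (S : Finset (Fin (n + 2))), y ∉ S → ∀ j ∈ S,
      ((G.t (σe j) : ℕ) = (G.t j : ℕ) ∧ (G.t j : ℕ) ≠ p ∧ (G.t j : ℕ) ≠ p + 1
        ∧ (G.t j : ℕ) ≠ q ∧ (G.t j : ℕ) ≠ q + 1)
      ∨ ((G.t j : ℕ) = (G.t x : ℕ) ∧ (G.t (σe j) : ℕ) = (G.t y : ℕ))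
      ∨ ((G.t j : ℕ) = (G.h x : ℕ) ∧ (G.t (σe j) : ℕ) = (G.h y : ℕ)) := by
    intro S hyS j hj
    by_cases hjx : j = x
    · subst hjx
      rw [hσe, Equiv.swap_apply_left]
      exact Or.inr (Or.inl ⟨rfl, rfl⟩)
    · have hjy : j ≠ y := fun hc => hyS (hc ▸ hj)
      left
      have := havT j hjx hjy
      simp only [mem_insert, mem_singleton, not_or] at this
      rw [hσe, Equiv.swap_apply_of_ne_of_ne hjx hjy]
      exact ⟨rfl, this.1, this.2.1, this.2.2.1, this.2.2.2⟩
  have pairH : ∀ (S : Finset (Fin (n + 2))), y ∉ S → ∀ j ∈ S,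
      ((G.h (σe j) : ℕ) = (G.h j : ℕ) ∧ (G.h j : ℕ) ≠ p ∧ (G.h j : ℕ) ≠ p + 1
        ∧ (G.h j : ℕ) ≠ q ∧ (G.h j : ℕ) ≠ q + 1)
      ∨ ((G.h j : ℕ) = (G.t x : ℕ) ∧ (G.h (σe j) : ℕ) = (G.t y : ℕ))
      ∨ ((G.h j : ℕ) = (G.h x : ℕ) ∧ (G.h (σe j) : ℕ) = (G.h y : ℕ)) := by
    intro S hyS j hj
    by_cases hjx : j = x
    · subst hjx
      rw [hσe, Equiv.swap_apply_left]
      exact Or.inr (Or.inr ⟨rfl, rfl⟩)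
    · have hjy : j ≠ y := fun hc => hyS (hc ▸ hj)
      left
      have := havH j hjx hjy
      simp only [mem_insert, mem_singleton, not_or] at this
      rw [hσe, Equiv.swap_apply_of_ne_of_ne hjx hjy]
      exact ⟨rfl, this.1, this.2.1, this.2.2.1, this.2.2.2⟩
  have hrk_img : ∀ (S : Finset (Fin (n + 2))) (c : ℕ), GaussDiagram.rk G (S.image σe) c
      = (S.filter fun j => (G.t (σe j) : ℕ) < c).card
        + (S.filter fun j => (G.h (σe j) : ℕ) < c).card := by
    intro S c
    rw [GaussDiagram.rk, filter_image, filter_image,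
      card_image_of_injective _ σe.injective, card_image_of_injective _ σe.injective]
  have hPswap : ∀ S : Finset (Fin (n + 2)), x ∈ S → y ∉ S →
      ((G.OneComponentSub S ∧ G.AscendingSub S) ↔
        (G.OneComponentSub (S.image σe) ∧ G.AscendingSub (S.image σe))) := by
    intro S hxS hyS
    apply GaussDiagram.pred_transfer G G S (S.image σe) σe (σe.injective.injOn) rfl
    · intro i hiS
      rw [hrk_img, GaussDiagram.rk]
      refine congrArg₂ (· + ·) ?_ ?_
      · exact congrArg Finset.card (filter_congr fun j hj =>
          (cmp_transfer hvt hvh hpq4 (pairT S hyS j hj) (pairT S hyS i hiS)).symm)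
      · exact congrArg Finset.card (filter_congr fun j hj =>
          (cmp_transfer hvt hvh hpq4 (pairH S hyS j hj) (pairT S hyS i hiS)).symm)
    · intro i hiS
      rw [hrk_img, GaussDiagram.rk]
      refine congrArg₂ (· + ·) ?_ ?_
      · exact congrArg Finset.card (filter_congr fun j hj =>
          (cmp_transfer hvt hvh hpq4 (pairT S hyS j hj) (pairH S hyS i hiS)).symm)
      · exact congrArg Finset.card (filter_congr fun j hj =>
          (cmp_transfer hvt hvh hpq4 (pairH S hyS j hj) (pairH S hyS i hiS)).symm)
  have hcancel : ∀ S : Finset (Fin (n + 2)), x ∈ S → y ∉ S →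
      ((if S.card = k ∧ G.OneComponentSub S ∧ G.AscendingSub S then ∏ i ∈ S, G.ε i else 0) +
        (if (S.image σe).card = k ∧ G.OneComponentSub (S.image σe) ∧ G.AscendingSub (S.image σe)
          then ∏ i ∈ S.image σe, G.ε i else 0)) = 0 := by
    intro S hxS hyS
    have hcard : (S.image σe).card = S.card := card_image_of_injective _ σe.injective
    have hprod : ∏ i ∈ S.image σe, G.ε i = - ∏ i ∈ S, G.ε i := by
      rw [prod_image (fun a _ b _ hab => σe.injective hab)]
      have h1 : ∏ i ∈ S, G.ε (σe i) = G.ε (σe x) * ∏ i ∈ S.erase x, G.ε (σe i) :=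
        (mul_prod_erase S _ hxS).symm
      have h2 : ∏ i ∈ S, G.ε i = G.ε x * ∏ i ∈ S.erase x, G.ε i :=
        (mul_prod_erase S _ hxS).symm
      have h3 : ∏ i ∈ S.erase x, G.ε (σe i) = ∏ i ∈ S.erase x, G.ε i := by
        refine prod_congr rfl fun i hi => ?_
        have hix : i ≠ x := (mem_erase.mp hi).1
        have hiy : i ≠ y := fun hc => hyS (hc ▸ (mem_erase.mp hi).2)
        rw [hσe, Equiv.swap_apply_of_ne_of_ne hix hiy]
      have h4 : G.ε (σe x) = - G.ε x := by
        rw [hσe, Equiv.swap_apply_left]; omega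
      rw [h1, h2, h3, h4]
      ring
    by_cases hP : S.card = k ∧ G.OneComponentSub S ∧ G.AscendingSub S
    · rw [if_pos hP, if_pos ⟨hcard.trans hP.1, (hPswap S hxS hyS).mp hP.2⟩, hprod]
      ring
    · rw [if_neg hP, if_neg (fun hc => hP ⟨hcard.symm.trans hc.1, (hPswap S hxS hyS).mpr hc.2⟩)]
      ring
  -- both x and y present : predicate fails
  have hrkp : ∀ S : Finset (Fin (n + 2)), x ∈ S → y ∈ S →
      GaussDiagram.rk G S (p + 1) = GaussDiagram.rk G S p + 1 := by
    intro S hxS hyS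
    rw [GaussDiagram.rk, GaussDiagram.rk]
    obtain ⟨w, w', hwS, hw'S, hwv, hw'v, hww'⟩ :
        ∃ w w', w ∈ S ∧ w' ∈ S ∧ (G.t w : ℕ) = p ∧ (G.t w' : ℕ) = p + 1 ∧ w ≠ w' := by
      rcases hvt with ⟨h1, h2⟩ | ⟨h1, h2⟩
      · exact ⟨x, y, hxS, hyS, h1, h2, hxy⟩
      · exact ⟨y, x, hyS, hxS, h2, h1, Ne.symm hxy⟩
    have hTeq : S.filter (fun j => (G.t j : ℕ) < p + 1)
        = insert w (S.filter fun j => (G.t j : ℕ) < p) := by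
      ext j
      simp only [mem_filter, mem_insert]
      constructor
      · rintro ⟨hjS, hjlt⟩
        by_cases hjw : j = w
        · exact Or.inl hjw
        · right
          refine ⟨hjS, ?_⟩
          by_cases hjw' : j = w'
          · subst hjw'; omega
          · have hjx : j ≠ x ∧ j ≠ y := by
              constructor <;> intro hc <;> subst hc
              · rcases hvt with ⟨h1, h2⟩ | ⟨h1, h2⟩
                · exact hjw (G.t_injective (Fin.ext (by omega)))
                · exact hjw' (G.t_injective (Fin.ext (by omega)))
              · rcases hvt with ⟨h1, h2⟩ | ⟨h1, h2⟩
                · exact hjw' (G.t_injective (Fin.ext (by omega)))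
                · exact hjw (G.t_injective (Fin.ext (by omega)))
            have := havT j hjx.1 hjx.2
            simp only [mem_insert, mem_singleton, not_or] at this
            omega
      · rintro (rfl | ⟨hjS, hjlt⟩)
        · exact ⟨hwS, by omega⟩
        · exact ⟨hjS, by omega⟩
    have hHeq : S.filter (fun j => (G.h j : ℕ) < p + 1) = S.filter (fun j => (G.h j : ℕ) < p) := by
      refine filter_congr fun j hj => ?_
      by_cases hjx : j = x
      · subst hjx; omega
      · by_cases hjy : j = y
        · subst hjy; omega
        · have := havH j hjx hjy
          simp only [mem_insert, mem_singleton, not_or] at this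
          omega
    rw [hTeq, hHeq, card_insert_of_notMem (by simp only [mem_filter, not_and]; intro _; omega)]
    omega
  have hrkq : ∀ S : Finset (Fin (n + 2)), x ∈ S → y ∈ S →
      GaussDiagram.rk G S (q + 1) = GaussDiagram.rk G S q + 1 := by
    intro S hxS hyS
    rw [GaussDiagram.rk, GaussDiagram.rk]
    obtain ⟨w, w', hwS, hw'S, hwv, hw'v, hww'⟩ :
        ∃ w w', w ∈ S ∧ w' ∈ S ∧ (G.h w : ℕ) = q ∧ (G.h w' : ℕ) = q + 1 ∧ w ≠ w' := by
      rcases hvh with ⟨h1, h2⟩ | ⟨h1, h2⟩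
      · exact ⟨x, y, hxS, hyS, h1, h2, hxy⟩
      · exact ⟨y, x, hyS, hxS, h2, h1, Ne.symm hxy⟩
    have hHeq : S.filter (fun j => (G.h j : ℕ) < q + 1)
        = insert w (S.filter fun j => (G.h j : ℕ) < q) := by
      ext j
      simp only [mem_filter, mem_insert]
      constructor
      · rintro ⟨hjS, hjlt⟩
        by_cases hjw : j = w
        · exact Or.inl hjw
        · right
          refine ⟨hjS, ?_⟩
          by_cases hjw' : j = w'
          · subst hjw'; omega
          · have hjx : j ≠ x ∧ j ≠ y := by
              constructor <;> intro hc <;> subst hc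
              · rcases hvh with ⟨h1, h2⟩ | ⟨h1, h2⟩
                · exact hjw (G.h_injective (Fin.ext (by omega)))
                · exact hjw' (G.h_injective (Fin.ext (by omega)))
              · rcases hvh with ⟨h1, h2⟩ | ⟨h1, h2⟩
                · exact hjw' (G.h_injective (Fin.ext (by omega)))
                · exact hjw (G.h_injective (Fin.ext (by omega)))
            have := havH j hjx.1 hjx.2
            simp only [mem_insert, mem_singleton, not_or] at this
            omega
      · rintro (rfl | ⟨hjS, hjlt⟩)
        · exact ⟨hwS, by omega⟩
        · exact ⟨hjS, by omega⟩
    have hTeq : S.filter (fun j => (G.t j : ℕ) < q + 1) = S.filter (fun j => (G.t j : ℕ) < q) := by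
      refine filter_congr fun j hj => ?_
      by_cases hjx : j = x
      · subst hjx; omega
      · by_cases hjy : j = y
        · subst hjy; omega
        · have := havT j hjx hjy
          simp only [mem_insert, mem_singleton, not_or] at this
          omega
    rw [hTeq, hHeq, card_insert_of_notMem (by simp only [mem_filter, not_and]; intro _; omega)]
    omega
  have hboth : ∀ S : Finset (Fin (n + 2)), x ∈ S → y ∈ S →
      ¬ (G.OneComponentSub S ∧ G.AscendingSub S) := by
    intro S hxS hyS hPred
    set jx : Fin S.card := (S.orderIsoOfFin rfl).symm ⟨x, hxS⟩ with hjxd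
    set jy : Fin S.card := (S.orderIsoOfFin rfl).symm ⟨y, hyS⟩ with hjyd
    have e1 : ((G.sub S).t jx : ℕ) = GaussDiagram.rk G S ((G.t x) : ℕ) := G.sub_t_val' S hxS
    have e2 : ((G.sub S).t jy : ℕ) = GaussDiagram.rk G S ((G.t y) : ℕ) := G.sub_t_val' S hyS
    have e3 : ((G.sub S).h jx : ℕ) = GaussDiagram.rk G S ((G.h x) : ℕ) := G.sub_h_val' S hxS
    have e4 : ((G.sub S).h jy : ℕ) = GaussDiagram.rk G S ((G.h y) : ℕ) := G.sub_h_val' S hyS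
    have hd4 : ∀ u v : Fin S.card, ((G.sub S).t u : ℕ) ≠ ((G.sub S).h v : ℕ) :=
      fun u v hc => (G.sub S).t_ne_h u v (Fin.ext hc)
    have d1 := hd4 jx jx
    have d2 := hd4 jx jy
    have d3 := hd4 jy jx
    have d4 := hd4 jy jy
    rw [e1, e3] at d1
    rw [e1, e4] at d2
    rw [e2, e3] at d3
    rw [e2, e4] at d4
    have hp1 := hrkp S hxS hyS
    have hq1 := hrkq S hxS hyS
    rcases hvt with ⟨h1, h2⟩ | ⟨h1, h2⟩ <;> rcases hvh with ⟨h3, h4⟩ | ⟨h3, h4⟩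
    · exact GaussDiagram.notBoth (G.sub S) jx jy (GaussDiagram.rk G S p) (GaussDiagram.rk G S q)
        (by rw [e1, h1]) (by rw [e2, h2, hp1])
        (Or.inl ⟨by rw [e3, h3], by rw [e4, h4, hq1]⟩)
        (by rw [h1, h3] at d1; rw [h1, h4] at d2; rw [h2, h3] at d3; rw [h2, h4] at d4
            rw [hq1] at d2 d4; rw [hp1] at d3 d4
            exact ⟨d1, d2, d3, d4⟩)
        ⟨hPred.1, hPred.2⟩
    · exact GaussDiagram.notBoth (G.sub S) jx jy (GaussDiagram.rk G S p) (GaussDiagram.rk G S q)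
        (by rw [e1, h1]) (by rw [e2, h2, hp1])
        (Or.inr ⟨by rw [e3, h3, hq1], by rw [e4, h4]⟩)
        (by rw [h1, h3] at d1; rw [h1, h4] at d2; rw [h2, h3] at d3; rw [h2, h4] at d4
            rw [hq1] at d1 d3; rw [hp1] at d3 d4
            exact ⟨d2, d1, d4, d3⟩)
        ⟨hPred.1, hPred.2⟩
    · exact GaussDiagram.notBoth (G.sub S) jy jx (GaussDiagram.rk G S p) (GaussDiagram.rk G S q)
        (by rw [e2, h2]) (by rw [e1, h1, hp1])
        (Or.inr ⟨by rw [e4, h4, hq1], by rw [e3, h3]⟩)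
        (by rw [h1, h3] at d1; rw [h1, h4] at d2; rw [h2, h3] at d3; rw [h2, h4] at d4
            rw [hq1] at d2 d4; rw [hp1] at d1 d2
            exact ⟨d3, d4, d1, d2⟩)
        ⟨hPred.1, hPred.2⟩
    · exact GaussDiagram.notBoth (G.sub S) jy jx (GaussDiagram.rk G S p) (GaussDiagram.rk G S q)
        (by rw [e2, h2]) (by rw [e1, h1, hp1])
        (Or.inl ⟨by rw [e4, h4], by rw [e3, h3, hq1]⟩)
        (by rw [h1, h3] at d1; rw [h1, h4] at d2; rw [h2, h3] at d3; rw [h2, h4] at d4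
            rw [hq1] at d1 d3; rw [hp1] at d1 d2
            exact ⟨d4, d3, d2, d1⟩)
        ⟨hPred.1, hPred.2⟩
  -- range of e
  have hrange : ∀ i : Fin (n + 2), i ≠ x → i ≠ y → ∃ j : Fin n, e j = i := by
    intro i hix hiy
    have hsub : (univ : Finset (Fin n)).image e ⊆ (univ : Finset (Fin (n + 2))) \ {x, y} := by
      intro a ha
      obtain ⟨b, _, rfl⟩ := mem_image.mp ha
      simp only [mem_sdiff, mem_univ, mem_insert, mem_singleton, not_or, true_and]
      exact hex b
    have hcard1 : ((univ : Finset (Fin n)).image e).card = n := by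
      rw [card_image_of_injective _ he, card_univ, Fintype.card_fin]
    have hcard2 : ((univ : Finset (Fin (n + 2))) \ {x, y}).card = n := by
      rw [card_sdiff_of_subset (by intro a _; exact mem_univ a)]
      have : ({x, y} : Finset (Fin (n + 2))).card = 2 := card_pair hxy
      rw [this, card_univ, Fintype.card_fin]
      omega
    have heq : (univ : Finset (Fin n)).image e = (univ : Finset (Fin (n + 2))) \ {x, y} :=
      eq_of_subset_of_card_le hsub (by omega)
    have : i ∈ (univ : Finset (Fin (n + 2))) \ {x, y} := by
      simp only [mem_sdiff, mem_univ, mem_insert, mem_singleton, not_or, true_and]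
      exact ⟨hix, hiy⟩
    rw [← heq] at this
    obtain ⟨j, _, hj⟩ := mem_image.mp this
    exact ⟨j, hj⟩
  -- the main correspondence with G'
  have hmain : ∀ T : Finset (Fin n),
      ((G'.OneComponentSub T ∧ G'.AscendingSub T) ↔
        (G.OneComponentSub (T.image e) ∧ G.AscendingSub (T.image e))) := by
    intro T
    apply GaussDiagram.pred_transfer G' G T (T.image e) e he.injOn rfl
    · intro i hiT
      rw [GaussDiagram.rk, GaussDiagram.rk, filter_image, filter_image,
        card_image_of_injective _ he, card_image_of_injective _ he]
      refine congrArg₂ (· + ·) ?_ ?_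
      · refine congrArg Finset.card (filter_congr fun j hj => ?_)
        rw [h't j, h't i]
        exact (delRenum_lt_iff (havT (e j) (hex j).1 (hex j).2)
          (havT (e i) (hex i).1 (hex i).2)).symm
      · refine congrArg Finset.card (filter_congr fun j hj => ?_)
        rw [h'h j, h't i]
        exact (delRenum_lt_iff (havH (e j) (hex j).1 (hex j).2)
          (havT (e i) (hex i).1 (hex i).2)).symm
    · intro i hiT
      rw [GaussDiagram.rk, GaussDiagram.rk, filter_image, filter_image,
        card_image_of_injective _ he, card_image_of_injective _ he]
      refine congrArg₂ (· + ·) ?_ ?_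
      · refine congrArg Finset.card (filter_congr fun j hj => ?_)
        rw [h't j, h'h i]
        exact (delRenum_lt_iff (havT (e j) (hex j).1 (hex j).2)
          (havH (e i) (hex i).1 (hex i).2)).symm
      · refine congrArg Finset.card (filter_congr fun j hj => ?_)
        rw [h'h j, h'h i]
        exact (delRenum_lt_iff (havH (e j) (hex j).1 (hex j).2)
          (havH (e i) (hex i).1 (hex i).2)).symm
  -- assemble the sums
  unfold GaussDiagram.F
  rw [← sum_filter_add_sum_filter_not univ (fun S : Finset (Fin (n + 2)) => x ∈ S ↔ y ∈ S)]
  rw [← sum_filter_add_sum_filter_not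
    (univ.filter (fun S : Finset (Fin (n + 2)) => x ∈ S ↔ y ∈ S))
    (fun S : Finset (Fin (n + 2)) => x ∈ S)]
  have hz1 : ∑ S ∈ (univ.filter (fun S : Finset (Fin (n + 2)) => x ∈ S ↔ y ∈ S)).filter
      (fun S : Finset (Fin (n + 2)) => x ∈ S),
      (if S.card = k ∧ G.OneComponentSub S ∧ G.AscendingSub S then ∏ i ∈ S, G.ε i else 0) = 0 := by
    refine sum_eq_zero fun S hS => ?_
    simp only [mem_filter, mem_univ, true_and] at hS
    exact if_neg fun hc => hboth S hS.2 (hS.1.mp hS.2) hc.2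
  have hz2 : ∑ S ∈ univ.filter (fun S : Finset (Fin (n + 2)) => ¬(x ∈ S ↔ y ∈ S)),
      (if S.card = k ∧ G.OneComponentSub S ∧ G.AscendingSub S then ∏ i ∈ S, G.ε i else 0) = 0 := by
    refine sum_involution (fun S _ => S.image σe) ?_ ?_ ?_ ?_
    · intro S hS
      simp only [mem_filter, mem_univ, true_and] at hS
      by_cases hxS : x ∈ S
      · have hyS : y ∉ S := fun hyS => hS ⟨fun _ => hyS, fun _ => hxS⟩
        exact hcancel S hxS hyS
      · have hyS : y ∈ S := by
          by_contra hyS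
          exact hS ⟨fun hc => absurd hc hxS, fun hc => absurd hc hyS⟩
        have hx' : x ∈ S.image σe := (hmem_img S).1.mpr hyS
        have hy' : y ∉ S.image σe := fun hc => hxS ((hmem_img S).2.mp hc)
        have := hcancel (S.image σe) hx' hy'
        rw [himg2 S] at this
        linarith
    · intro S hS _
      intro hc
      simp only [mem_filter, mem_univ, true_and] at hS
      refine hS ?_
      have hc' : S.image σe = S := hc
      have h1 := (hmem_img S).1
      rw [hc'] at h1
      exact h1
    · intro S hS
      simp only [mem_filter, mem_univ, true_and] at hS
      have h1 : x ∈ S.image σe ↔ y ∈ S := (hmem_img S).1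
      have h2 : y ∈ S.image σe ↔ x ∈ S := (hmem_img S).2
      simp only [mem_filter, mem_univ, true_and]
      intro hcon
      exact hS ⟨fun hx => h1.mp (hcon.mpr (h2.mpr hx)), fun hy => h2.mp (hcon.mp (h1.mpr hy))⟩
    · intro S _
      exact himg2 S
  have hz3 : ∑ S ∈ (univ.filter (fun S : Finset (Fin (n + 2)) => x ∈ S ↔ y ∈ S)).filter
      (fun S : Finset (Fin (n + 2)) => ¬ x ∈ S),
      (if S.card = k ∧ G.OneComponentSub S ∧ G.AscendingSub S then ∏ i ∈ S, G.ε i else 0)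
      = ∑ T : Finset (Fin n),
      (if T.card = k ∧ G'.OneComponentSub T ∧ G'.AscendingSub T then ∏ i ∈ T, G'.ε i else 0) := by
    refine sum_nbij' (fun S => S.preimage e he.injOn) (fun T => T.image e)
      (fun S _ => mem_univ _) ?_ ?_ ?_ ?_
    · intro T _
      simp only [mem_filter, mem_univ, true_and]
      have hx' : x ∉ T.image e := fun hc => by
        obtain ⟨b, _, hbe⟩ := mem_image.mp hc
        exact (hex b).1 hbe
      have hy' : y ∉ T.image e := fun hc => by
        obtain ⟨b, _, hbe⟩ := mem_image.mp hc
        exact (hex b).2 hbe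
      exact ⟨⟨fun hc => absurd hc hx', fun hc => absurd hc hy'⟩, hx'⟩
    · intro S hS
      simp only [mem_filter, mem_univ, true_and] at hS
      have hxS : x ∉ S := hS.2
      have hyS : y ∉ S := fun hc => hxS (hS.1.mpr hc)
      ext i
      simp only [mem_image, mem_preimage]
      constructor
      · rintro ⟨j, hj, rfl⟩
        exact hj
      · intro hiS
        have hix : i ≠ x := fun hc => hxS (hc ▸ hiS)
        have hiy : i ≠ y := fun hc => hyS (hc ▸ hiS)
        obtain ⟨j, hj⟩ := hrange i hix hiy
        exact ⟨j, by rw [hj]; exact hiS, hj⟩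
    · intro T _
      ext j
      simp only [mem_preimage, mem_image]
      constructor
      · rintro ⟨b, hb, hbe⟩
        exact (he hbe) ▸ hb
      · intro hj
        exact ⟨j, hj, rfl⟩
    · intro S hS
      simp only [mem_filter, mem_univ, true_and] at hS
      have hxS : x ∉ S := hS.2
      have hyS : y ∉ S := fun hc => hxS (hS.1.mpr hc)
      set T := S.preimage e he.injOn with hT
      have hSeq : S = T.image e := by
        ext i
        simp only [hT, mem_image, mem_preimage]
        constructor
        · intro hiS
          have hix : i ≠ x := fun hc => hxS (hc ▸ hiS)
          have hiy : i ≠ y := fun hc => hyS (hc ▸ hiS)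
          obtain ⟨j, hj⟩ := hrange i hix hiy
          exact ⟨j, by rw [hj]; exact hiS, hj⟩
        · rintro ⟨j, hj, rfl⟩
          exact hj
      have hcard : (T.image e).card = T.card := card_image_of_injective _ he
      have hprod : ∏ i ∈ T.image e, G.ε i = ∏ j ∈ T, G'.ε j := by
        rw [prod_image (fun a _ b _ hab => he hab)]
        exact prod_congr rfl fun j _ => (h'e j).symm
      have hgoal : (if S.card = k ∧ G.OneComponentSub S ∧ G.AscendingSub S
            then ∏ i ∈ S, G.ε i else 0)
          = (if T.card = k ∧ G'.OneComponentSub T ∧ G'.AscendingSub T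
            then ∏ i ∈ T, G'.ε i else 0) := by
        rw [hSeq]
        exact if_congr (and_congr (by rw [hcard]) (hmain T).symm) hprod rfl
      exact hgoal
  rw [hz1, hz2, hz3]
  ring
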